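/- Let K be a compact topological space, N ≥ 1, and let f_1, …, f_N : K → ℂ be continuous functions such that no nontrivial complex linear combination of them vanishes identically on K. Let μ be a Borel probability measure on K whose Gram matrix G(μ), with entries G(μ)_{ij} = ∫_K f_i · conj(f_j) dμ, is positive definite, and define the distortion function ρ_μ : K → ℝ by ρ_μ(x) = ⟨G(μ)^{-1} F(x), F(x)⟩ where F(x) = (f_1(x),…,f_N(x)) ∈ ℂ^N and ⟨·,·⟩ is the standard Hermitian inner product. Then μ maximizes ν ↦ det G(ν) over all Borel probability measures ν on K if and only if sup_{x∈K} ρ_μ(x) = N. Moreover in that case ρ_μ(x) = N for μ-almost every x. -/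

import Mathlib

open MeasureTheory
open scoped ComplexOrder

/-- The Gram matrix of the functions `f i` with respect to a measure `ν`. -/
noncomputable def gramMatrix {K : Type*} [MeasurableSpace K] {N : ℕ}
    (f : Fin N → K → ℂ) (ν : Measure K) : Matrix (Fin N) (Fin N) ℂ :=
  Matrix.of fun i j => ∫ x, f i x * (starRingEnd ℂ) (f j x) ∂ν

/-- The Bergman distortion function `ρ_μ(x) = ⟨G(μ)⁻¹ F(x), F(x)⟩`,
where `F(x) = (f₁(x),…,f_N(x))`. -/
noncomputable def distortion {K : Type*} [MeasurableSpace K] {N : ℕ}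
    (f : Fin N → K → ℂ) (μ : Measure K) (x : K) : ℝ :=
  (dotProduct (star fun i => f i x)
    ((gramMatrix f μ)⁻¹.mulVec fun i => f i x)).re

/-!
`∫ ρ_μ dν = Re tr(G(μ)⁻¹ G(ν))`, so in particular `∫ ρ_μ dμ = N`.

If `ρ_μ ≤ N` on `K`, then `tr(G(μ)⁻¹ G(ν)) ≤ N` for every probability measure `ν`, and the
AM–GM inequality for the eigenvalues of `G(μ)^{-1/2} G(ν) G(μ)^{-1/2}` gives
`det G(ν) ≤ det G(μ)`.

Conversely, by the matrix determinant lemma, moving mass `t` from `μ` to a Dirac mass at `x`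
multiplies `det G` by `(1 - t)^N (1 + t ρ_μ(x) / (1 - t))`, whose derivative at `t = 0` is
`ρ_μ(x) - N`; so optimality forces `ρ_μ ≤ N`. Together with `∫ ρ_μ dμ = N` this gives
`ρ_μ = N` `μ`-almost everywhere, and hence `sup ρ_μ = N`.
-/

open Matrix

namespace Matrix

variable {n : Type*} [Fintype n] [DecidableEq n]

theorem det_add_vecMulVec {α : Type*} [CommRing α] {A : Matrix n n α} (hA : IsUnit A.det)
    (u v : n → α) : (A + vecMulVec u v).det = A.det * (1 + v ⬝ᵥ A⁻¹ *ᵥ u) := by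
  rw [vecMulVec_eq Unit, det_add_replicateCol_mul_replicateRow hA, Matrix.mul_assoc,
    ← replicateCol_mulVec, det_unique (1 + _ : Matrix Unit Unit α), add_apply, one_apply_eq,
    replicateRow_mul_replicateCol_apply]

theorem det_smul_add_vecMulVec {α : Type*} [Field α] {A : Matrix n n α} (hA : IsUnit A.det)
    {c : α} (hc : c ≠ 0) (u v : n → α) :
    (c • A + vecMulVec u v).det = c ^ Fintype.card n * A.det * (1 + c⁻¹ * (v ⬝ᵥ A⁻¹ *ᵥ u)) := by
  have : c • A + vecMulVec u v = c • (A + vecMulVec (c⁻¹ • u) v) := by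
    rw [smul_add, smul_vecMulVec, smul_smul, mul_inv_cancel₀ hc, one_smul]
  rw [this, det_smul, det_add_vecMulVec hA, mulVec_smul, dotProduct_smul, smul_eq_mul, mul_assoc]

theorem PosSemidef.re_det_le_one {𝕜 : Type*} [RCLike 𝕜] {C : Matrix n n 𝕜} (hC : C.PosSemidef)
    (h : RCLike.re C.trace ≤ Fintype.card n) : RCLike.re C.det ≤ 1 := by
  have hev := hC.eigenvalues_nonneg
  have hsum : ∑ i, hC.1.eigenvalues i ≤ Fintype.card n := by
    simpa [hC.1.trace_eq_sum_eigenvalues] using h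
  rw [hC.1.det_eq_prod_eigenvalues, ← RCLike.ofReal_prod, RCLike.ofReal_re]
  calc ∏ i, hC.1.eigenvalues i ≤ ∏ i, Real.exp (hC.1.eigenvalues i - 1) :=
        Finset.prod_le_prod (fun i _ => hev i) fun i _ => by
          linarith [Real.add_one_le_exp (hC.1.eigenvalues i - 1)]
    _ = Real.exp (∑ i, hC.1.eigenvalues i - Fintype.card n) := by
        simp [← Real.exp_sum, Finset.sum_sub_distrib]
    _ ≤ 1 := Real.exp_le_one_iff.2 (by linarith)

open scoped MatrixOrder in
theorem PosDef.re_det_le_of_re_trace_inv_mul_le {𝕜 : Type*} [RCLike 𝕜] {P Q : Matrix n n 𝕜}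
    (hP : P.PosDef) (hQ : Q.PosSemidef) (h : RCLike.re (P⁻¹ * Q).trace ≤ Fintype.card n) :
    RCLike.re Q.det ≤ RCLike.re P.det := by
  set S := CFC.sqrt P⁻¹
  have hS : S.PosSemidef := nonneg_iff_posSemidef.mp (CFC.sqrt_nonneg _)
  have hSS : S * S = P⁻¹ :=
    CFC.sqrt_mul_sqrt_self _ (nonneg_iff_posSemidef.mpr hP.inv.posSemidef)
  have hC : (S * Q * S).PosSemidef := by
    simpa [hS.1.eq] using hQ.mul_mul_conjTranspose_same S
  have htr : (S * Q * S).trace = (P⁻¹ * Q).trace := by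
    rw [trace_mul_comm, ← Matrix.mul_assoc, hSS]
  have hdet : Q.det = P.det * (S * Q * S).det := by
    have : (S * Q * S).det = P⁻¹.det * Q.det := by rw [det_mul, det_mul, ← hSS, det_mul]; ring
    rw [this, ← mul_assoc, ← det_mul, mul_nonsing_inv _ hP.det_pos.ne'.isUnit, det_one, one_mul]
  obtain ⟨hPre, hPim⟩ := RCLike.pos_iff.1 hP.det_pos
  rw [hdet, RCLike.mul_re, hPim, zero_mul, sub_zero]
  exact mul_le_of_le_one_right hPre.le (hC.re_det_le_one (htr ▸ h))

end Matrix

theorem exists_one_lt_one_sub_pow_mul {N : ℕ} {r : ℝ} (hr : (N : ℝ) < r) :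
    ∃ t : ℝ, 0 < t ∧ t < 1 ∧ 1 < (1 - t) ^ N * (1 + t / (1 - t) * r) := by
  have hN : (0 : ℝ) ≤ N := N.cast_nonneg
  have hr0 : 0 < r := hN.trans_lt hr
  set t := (r - N) / (2 * r * (N + 1))
  have ht0 : 0 < t := by positivity
  have ht : t * (2 * r * (N + 1)) = r - N := div_mul_cancel₀ _ (by positivity)
  have hNt1 : (N + 1) * t ≤ 1 / 2 :=
    le_of_mul_le_mul_right (a := 2 * r) (by linarith) (by positivity)
  have ht1 : t ≤ 1 / 2 := by nlinarith
  have hNt : N * t ≤ 1 / 2 := by nlinarith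
  have hNrt : N * r * t < r - N := by nlinarith
  refine ⟨t, ht0, by linarith, ?_⟩
  -- Bernoulli bounds the product below by `(1 - N t) (1 + t r) = 1 + t (r - N - N r t)`.
  have hbern : 1 - N * t ≤ (1 - t) ^ N := by
    simpa [sub_eq_add_neg] using one_add_mul_le_pow (a := -t) (by linarith) N
  have hfrac : t * r ≤ t / (1 - t) * r := by
    gcongr
    exact le_div_self ht0.le (by linarith) (by linarith)
  calc 1 < (1 - N * t) * (1 + t * r) := by nlinarith
    _ ≤ (1 - t) ^ N * (1 + t / (1 - t) * r) := by gcongr; nlinarith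

theorem Continuous.integrable_of_compactSpace {X E : Type*} [TopologicalSpace X]
    [MeasurableSpace X] [OpensMeasurableSpace X] [CompactSpace X] [NormedAddCommGroup E]
    {g : X → E} (hg : Continuous g) (μ : Measure X) [IsFiniteMeasure μ] : Integrable g μ :=
  hg.integrable_of_hasCompactSupport (.of_compactSpace g)

section Gram

variable {K : Type*} [MeasurableSpace K] {N : ℕ} {f : Fin N → K → ℂ}

theorem gramMatrix_isHermitian (f : Fin N → K → ℂ) (ν : Measure K) :
    (gramMatrix f ν).IsHermitian := by
  ext i j
  simp only [conjTranspose_apply, gramMatrix, of_apply, RCLike.star_def, ← integral_conj,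
    map_mul, Complex.conj_conj, mul_comm]

theorem gramMatrix_smul (f : Fin N → K → ℂ) (c : ENNReal) (ν : Measure K) :
    gramMatrix f (c • ν) = c.toReal • gramMatrix f ν := by
  ext i j
  simp [gramMatrix, integral_smul_measure]

variable [TopologicalSpace K] [BorelSpace K]

theorem gramMatrix_dirac (hcont : ∀ i, Continuous (f i)) (x : K) :
    gramMatrix f (Measure.dirac x) = vecMulVec (fun i => f i x) (star fun i => f i x) := by
  ext i j
  exact integral_dirac' _ _
    ((hcont i).mul (Complex.continuous_conj.comp (hcont j))).stronglyMeasurable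

variable [CompactSpace K]

theorem integrable_mul_conj (hcont : ∀ i, Continuous (f i)) (ν : Measure K) [IsFiniteMeasure ν]
    (i j : Fin N) : Integrable (fun x => f i x * starRingEnd ℂ (f j x)) ν :=
  ((hcont i).mul (Complex.continuous_conj.comp (hcont j))).integrable_of_compactSpace ν

theorem gramMatrix_add (hcont : ∀ i, Continuous (f i)) (μ ν : Measure K) [IsFiniteMeasure μ]
    [IsFiniteMeasure ν] : gramMatrix f (μ + ν) = gramMatrix f μ + gramMatrix f ν := by
  ext i j
  exact integral_add_measure (integrable_mul_conj hcont μ i j) (integrable_mul_conj hcont ν i j)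

theorem trace_mul_gramMatrix (hcont : ∀ i, Continuous (f i)) (B : Matrix (Fin N) (Fin N) ℂ)
    (ν : Measure K) [IsFiniteMeasure ν] :
    (B * gramMatrix f ν).trace = ∫ x, star (fun i => f i x) ⬝ᵥ B *ᵥ fun i => f i x ∂ν := by
  have hint (i j : Fin N) : Integrable (fun x => B i j * (f j x * starRingEnd ℂ (f i x))) ν :=
    (integrable_mul_conj hcont ν j i).const_mul _
  calc (B * gramMatrix f ν).trace
      = ∑ i, ∑ j, ∫ x, B i j * (f j x * starRingEnd ℂ (f i x)) ∂ν := by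
        simp only [trace, diag, mul_apply, gramMatrix, of_apply, integral_const_mul]
    _ = ∫ x, ∑ i, ∑ j, B i j * (f j x * starRingEnd ℂ (f i x)) ∂ν := by
        rw [integral_finsetSum _ fun i _ => integrable_finsetSum _ fun j _ => hint i j]
        exact Finset.sum_congr rfl fun i _ => (integral_finsetSum _ fun j _ => hint i j).symm
    _ = _ := by
        congr 1 with x
        simp only [dotProduct, mulVec, Pi.star_apply, RCLike.star_def, Finset.mul_sum]
        exact Finset.sum_congr rfl fun i _ => Finset.sum_congr rfl fun j _ => by ring

theorem gramMatrix_posSemidef (hcont : ∀ i, Continuous (f i)) (ν : Measure K)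
    [IsFiniteMeasure ν] : (gramMatrix f ν).PosSemidef := by
  refine .of_dotProduct_mulVec_nonneg (gramMatrix_isHermitian f ν) fun a => ?_
  have hquad : star a ⬝ᵥ gramMatrix f ν *ᵥ a = (vecMulVec a (star a) * gramMatrix f ν).trace := by
    rw [vecMulVec_mul, trace_vecMulVec, dotProduct_mulVec, dotProduct_comm]
  have hsq (x : K) : star (fun i => f i x) ⬝ᵥ vecMulVec a (star a) *ᵥ (fun i => f i x)
      = (Complex.normSq (star a ⬝ᵥ fun i => f i x) : ℂ) := by
    rw [vecMulVec_mulVec, dotProduct_smul, MulOpposite.smul_eq_mul_unop, MulOpposite.unop_op,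
      star_dotProduct, mul_comm, RCLike.star_def, Complex.mul_conj]
  rw [hquad, trace_mul_gramMatrix hcont, integral_congr_ae (.of_forall hsq), integral_complex_ofReal]
  exact Complex.zero_le_real.2 (integral_nonneg fun x => Complex.normSq_nonneg _)

end Gram

section Distortion

variable {K : Type*} [MeasurableSpace K] {N : ℕ} {f : Fin N → K → ℂ}

theorem ofReal_distortion (f : Fin N → K → ℂ) (μ : Measure K) (x : K) :
    (distortion f μ x : ℂ) = star (fun i => f i x) ⬝ᵥ (gramMatrix f μ)⁻¹ *ᵥ fun i => f i x :=
  Complex.ext rfl ((gramMatrix_isHermitian f μ).inv.im_star_dotProduct_mulVec_self _).symm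

def IsOptimalMeasure (f : Fin N → K → ℂ) (μ : Measure K) : Prop :=
  ∀ ν : Measure K, IsProbabilityMeasure ν → (gramMatrix f ν).det.re ≤ (gramMatrix f μ).det.re

variable [TopologicalSpace K]

theorem continuous_distortion (hcont : ∀ i, Continuous (f i)) (μ : Measure K) :
    Continuous (distortion f μ) := by
  have hF : Continuous fun x i => f i x := continuous_pi hcont
  unfold distortion
  fun_prop

variable [BorelSpace K] [CompactSpace K]

theorem integral_distortion (hcont : ∀ i, Continuous (f i)) (μ ν : Measure K)
    [IsFiniteMeasure ν] :
    ∫ x, distortion f μ x ∂ν = ((gramMatrix f μ)⁻¹ * gramMatrix f ν).trace.re := by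
  have hF : Continuous fun x i => f i x := continuous_pi hcont
  rw [trace_mul_gramMatrix hcont]
  exact integral_re ((by fun_prop : Continuous fun x =>
    star (fun i => f i x) ⬝ᵥ (gramMatrix f μ)⁻¹ *ᵥ fun i => f i x).integrable_of_compactSpace ν)

theorem integral_distortion_self (hcont : ∀ i, Continuous (f i)) {μ : Measure K}
    [IsProbabilityMeasure μ] (hG : (gramMatrix f μ).PosDef) :
    ∫ x, distortion f μ x ∂μ = N := by
  rw [integral_distortion hcont, nonsing_inv_mul _ hG.det_pos.ne'.isUnit, trace_one]
  simp

theorem isOptimalMeasure_of_distortion_le (hcont : ∀ i, Continuous (f i)) {μ : Measure K}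
    (hG : (gramMatrix f μ).PosDef) (hle : ∀ x, distortion f μ x ≤ N) : IsOptimalMeasure f μ := by
  intro ν _
  refine hG.re_det_le_of_re_trace_inv_mul_le (gramMatrix_posSemidef hcont ν) ?_
  rw [Fintype.card_fin]
  refine (integral_distortion hcont μ ν).symm.trans_le ?_
  calc ∫ x, distortion f μ x ∂ν ≤ ∫ _, (N : ℝ) ∂ν :=
        integral_mono ((continuous_distortion hcont μ).integrable_of_compactSpace ν)
          (integrable_const _) hle
    _ = N := by simp

theorem re_det_gramMatrix_mixture (hcont : ∀ i, Continuous (f i)) {μ : Measure K}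
    [IsFiniteMeasure μ] (hG : (gramMatrix f μ).PosDef) (x : K) {t : ℝ} (ht0 : 0 ≤ t)
    (ht1 : t < 1) :
    (gramMatrix f (ENNReal.ofReal (1 - t) • μ + ENNReal.ofReal t • Measure.dirac x)).det.re
      = (1 - t) ^ N * (1 + t / (1 - t) * distortion f μ x) * (gramMatrix f μ).det.re := by
  obtain ⟨-, him⟩ := Complex.pos_iff.1 hG.det_pos
  have hd : ((gramMatrix f μ).det.re : ℂ) = (gramMatrix f μ).det := Complex.ext rfl him
  have := μ.smul_finite (ENNReal.ofReal_ne_top (r := 1 - t))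
  have := (Measure.dirac x).smul_finite (ENNReal.ofReal_ne_top (r := t))
  have hmix : gramMatrix f (ENNReal.ofReal (1 - t) • μ + ENNReal.ofReal t • Measure.dirac x)
      = ((1 - t : ℝ) : ℂ) • gramMatrix f μ
        + vecMulVec ((t : ℂ) • fun i => f i x) (star fun i => f i x) := by
    rw [gramMatrix_add hcont, gramMatrix_smul, gramMatrix_smul, gramMatrix_dirac hcont,
      ENNReal.toReal_ofReal (by linarith), ENNReal.toReal_ofReal ht0, smul_vecMulVec]
    rfl
  have h1t : ((1 - t : ℝ) : ℂ) ≠ 0 := Complex.ofReal_ne_zero.2 (by linarith)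
  rw [hmix, det_smul_add_vecMulVec hG.det_pos.ne'.isUnit h1t, mulVec_smul, dotProduct_smul,
    smul_eq_mul, ← ofReal_distortion, Fintype.card_fin, ← hd]
  norm_cast
  ring

theorem distortion_le_of_isOptimalMeasure (hcont : ∀ i, Continuous (f i)) {μ : Measure K}
    [IsProbabilityMeasure μ] (hG : (gramMatrix f μ).PosDef) (hopt : IsOptimalMeasure f μ)
    (x : K) : distortion f μ x ≤ N := by
  by_contra! hx
  obtain ⟨t, ht0, ht1, hlt⟩ := exists_one_lt_one_sub_pow_mul hx
  have hν : IsProbabilityMeasure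
      (ENNReal.ofReal (1 - t) • μ + ENNReal.ofReal t • Measure.dirac x) := by
    refine ⟨?_⟩
    simp [← ENNReal.ofReal_add (by linarith : 0 ≤ 1 - t) ht0.le]
  have hdet := hopt _ hν
  rw [re_det_gramMatrix_mixture hcont hG x ht0.le ht1] at hdet
  obtain ⟨hpos, -⟩ := Complex.pos_iff.1 hG.det_pos
  exact hdet.not_gt ((lt_mul_iff_one_lt_left hpos).2 hlt)

theorem ae_distortion_eq_of_isOptimalMeasure (hcont : ∀ i, Continuous (f i)) {μ : Measure K}
    [IsProbabilityMeasure μ] (hG : (gramMatrix f μ).PosDef) (hopt : IsOptimalMeasure f μ) :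
    ∀ᵐ x ∂μ, distortion f μ x = N := by
  have hint : ∫ x, distortion f μ x ∂μ = ∫ _, (N : ℝ) ∂μ := by
    simp [integral_distortion_self hcont hG]
  exact (integral_eq_iff_of_ae_le ((continuous_distortion hcont μ).integrable_of_compactSpace μ)
    (integrable_const _) (.of_forall (distortion_le_of_isOptimalMeasure hcont hG hopt))).1 hint

end Distortion

theorem stmt_12_general {K : Type*} [TopologicalSpace K] [CompactSpace K]
    [MeasurableSpace K] [BorelSpace K]
    (N : ℕ) (f : Fin N → K → ℂ) (hcont : ∀ i, Continuous (f i))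
    (μ : Measure K) [IsProbabilityMeasure μ]
    (hG : (gramMatrix f μ).PosDef) :
    ((∀ ν : Measure K, IsProbabilityMeasure ν →
        ((gramMatrix f ν).det).re ≤ ((gramMatrix f μ).det).re) ↔
      (⨆ x : K, distortion f μ x) = N) ∧
    ((∀ ν : Measure K, IsProbabilityMeasure ν →
        ((gramMatrix f ν).det).re ≤ ((gramMatrix f μ).det).re) →
      ∀ᵐ x ∂μ, distortion f μ x = N) := by
  have hbdd : BddAbove (Set.range (distortion f μ)) :=
    (isCompact_range (continuous_distortion hcont μ)).bddAbove
  have hsup (hopt : IsOptimalMeasure f μ) : ⨆ x, distortion f μ x = N := by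
    obtain ⟨x, hx⟩ := (ae_distortion_eq_of_isOptimalMeasure hcont hG hopt).exists
    have : Nonempty K := ⟨x⟩
    exact le_antisymm (ciSup_le (distortion_le_of_isOptimalMeasure hcont hG hopt))
      (hx ▸ le_ciSup hbdd x)
  exact ⟨⟨hsup, fun h => isOptimalMeasure_of_distortion_le hcont hG fun x => h ▸ le_ciSup hbdd x⟩,
    ae_distortion_eq_of_isOptimalMeasure hcont hG⟩

/-- A Borel probability measure `μ` maximizes the Gram determinant over all Borel
probability measures (i.e. is an optimal measure) iff `sup_K ρ_μ = N`; and in that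
case `ρ_μ = N` holds `μ`-almost everywhere. -/
theorem stmt_12 {K : Type*} [TopologicalSpace K] [CompactSpace K]
    [MeasurableSpace K] [BorelSpace K]
    (N : ℕ) (hN : 1 ≤ N) (f : Fin N → K → ℂ) (hcont : ∀ i, Continuous (f i))
    (hind : ∀ a : Fin N → ℂ, (∀ x, ∑ i, a i * f i x = 0) → a = 0)
    (μ : Measure K) [IsProbabilityMeasure μ]
    (hG : (gramMatrix f μ).PosDef) :
    ((∀ ν : Measure K, IsProbabilityMeasure ν →
        ((gramMatrix f ν).det).re ≤ ((gramMatrix f μ).det).re) ↔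
      (⨆ x : K, distortion f μ x) = N) ∧
    ((∀ ν : Measure K, IsProbabilityMeasure ν →
        ((gramMatrix f ν).det).re ≤ ((gramMatrix f μ).det).re) →
      ∀ᵐ x ∂μ, distortion f μ x = N) :=
  stmt_12_general N f hcont μ hG
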